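/- Let (G, M, Ĩ) be a fuzzy formal context and J̃ = 1 - Ĩ its complement. A pair (A, B) with A ⊆ G, B ⊆ M is a c-formal concept of (G,M,Ĩ) (i.e., A⁺_c = B and B⁻_c = A) if and only if (G\A, B) is a c-object oriented concept of (G,M,J̃) (i.e., (G\A)^□_c = B and B^◇_{>1-c} = G\A, computed with respect to J̃). -/
import Mathlib


/-- Infimum with the convention `inf ∅ = 1`. -/
noncomputable def fInf (S : Set ℝ) : ℝ := sInf (insert 1 S)

/-- Supremum with the convention `sup ∅ = 0`. -/
noncomputable def fSup (S : Set ℝ) : ℝ := sSup (insert 0 S)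

/-- `A⁺_c = {m | inf_{g∈A} K̃(g,m) ≥ c}`. -/
noncomputable def plusCut {G M : Type*} (K : G → M → ℝ) (c : ℝ) (A : Set G) : Set M :=
  {m | fInf ((fun g => K g m) '' A) ≥ c}

/-- `B⁻_c = {g | inf_{m∈B} K̃(g,m) ≥ c}`. -/
noncomputable def minusCut {G M : Type*} (K : G → M → ℝ) (c : ℝ) (B : Set M) : Set G :=
  {g | fInf ((fun m => K g m) '' B) ≥ c}

/-- `A^□_c = {m | inf_{g∉A} (1 - K̃(g,m)) ≥ c}`. -/
noncomputable def boxCut {G M : Type*} (K : G → M → ℝ) (c : ℝ) (A : Set G) : Set M :=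
  {m | fInf ((fun g => 1 - K g m) '' Aᶜ) ≥ c}

/-- `B^◇_{>1-c} = {g | sup_{m∈B} K̃(g,m) > 1-c}`. -/
noncomputable def diamondStrictCut {G M : Type*} (K : G → M → ℝ) (c : ℝ) (B : Set M) : Set G :=
  {g | fSup ((fun m => K g m) '' B) > c}

lemma sSup_one_sub_aux (S : Set ℝ) (hne : S.Nonempty) (hbd : BddBelow S) :
    sSup ((fun x => 1 - x) '' S) = 1 - sInf S := by
  have h := isGLB_csInf hne hbd
  refine IsLUB.csSup_eq ?_ (hne.image _)
  constructor
  · rintro y ⟨x, hx, rfl⟩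
    have := h.1 hx
    simp only
    linarith
  · intro b hb
    have hlb : (1 - b) ∈ lowerBounds S := by
      intro x hx
      have : 1 - x ≤ b := hb ⟨x, hx, rfl⟩
      linarith
    have := h.2 hlb
    linarith

/-- `(A, B)` is a `c`-formal concept of `(G,M,Ĩ)` iff `(G\A, B)` is a
`c`-object oriented concept of the complemented context `(G,M,J̃)`, `J̃ = 1 - Ĩ`. -/
theorem formal_concept_iff_object_oriented_complement {G M : Type*} (I J : G → M → ℝ)
    (hI : ∀ g m, I g m ∈ Set.Icc (0:ℝ) 1)
    (hJ : ∀ g m, J g m = 1 - I g m)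
    (A : Set G) (B : Set M) (c : ℝ) (hc : c ∈ Set.Icc (0:ℝ) 1) :
    (plusCut I c A = B ∧ minusCut I c B = A) ↔
      (boxCut J c (Set.univ \ A) = B ∧ diamondStrictCut J (1 - c) B = Set.univ \ A) := by
  have hbox : boxCut J c (Set.univ \ A) = plusCut I c A := by
    have himg : ∀ m, (fun g => 1 - J g m) '' (Set.univ \ A)ᶜ = (fun g => I g m) '' A := by
      intro m
      have hA : (Set.univ \ A)ᶜ = A := by simp [Set.diff_eq]
      rw [hA]
      have : (fun g => 1 - J g m) = (fun g => I g m) := by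
        funext g; rw [hJ]; ring
      rw [this]
    unfold boxCut plusCut
    ext m
    simp only [Set.mem_setOf_eq, himg]
  have hdia : diamondStrictCut J (1 - c) B = (minusCut I c B)ᶜ := by
    ext g
    simp only [diamondStrictCut, minusCut, Set.mem_setOf_eq, Set.mem_compl_iff, not_le, ge_iff_le]
    have himg : (fun m => J g m) '' B = (fun x => (1:ℝ) - x) '' ((fun m => I g m) '' B) := by
      rw [Set.image_image]
      have : (fun m => J g m) = (fun m => (1:ℝ) - I g m) := by
        funext m; rw [hJ]
      rw [this]
    have hins : insert (0:ℝ) ((fun x => (1:ℝ) - x) '' ((fun m => I g m) '' B))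
        = (fun x => (1:ℝ) - x) '' (insert 1 ((fun m => I g m) '' B)) := by
      rw [Set.image_insert_eq]; norm_num
    have hbd : BddBelow (insert (1:ℝ) ((fun m => I g m) '' B)) := by
      refine ⟨0, ?_⟩
      rintro x (rfl | ⟨m, hm, rfl⟩)
      · norm_num
      · exact (hI g m).1
    have hkey : fSup ((fun m => J g m) '' B) = 1 - fInf ((fun m => I g m) '' B) := by
      unfold fSup fInf
      rw [himg, hins, sSup_one_sub_aux _ (Set.insert_nonempty _ _) hbd]
    rw [hkey]
    constructor <;> intro h <;> linarith
  rw [hbox, hdia]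
  constructor <;> rintro ⟨h1, h2⟩ <;> refine ⟨h1, ?_⟩
  · rw [h2]; simp [Set.diff_eq]
  · have := congrArg (·ᶜ) h2
    simpa [Set.diff_eq] using this
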